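/- arXiv:quant-ph/0607211 — 4 statements merged into one kernel-verified Lean document; each statement's English description precedes it below -/
import Mathlib

section
/- Let Λ be a finite type and Β a finite nonempty type with |Β| = M. Let μ be a probability mass function on Λ × Β with first marginal μ₁ (i.e., μ₁(α) = ∑_β μ(α,β)). Let Good ⊆ Λ and K > 0 satisfy: for every α ∈ Good and every β ∈ Β, μ(α,β) ≤ (K/M)·μ₁(α). Define ν on Λ × Β by ν(α,β) := μ₁(α)/M (so ν is a PMF, the product of μ₁ with the uniform distribution on Β). Then for every g : Λ × Β → ℝ with 0 ≤ g ≤ 1, ∑_{(α,β)} ν(α,β)·g(α,β) ≥ (1/K)·( ∑_{(α,β)} μ(α,β)·g(α,β) − ∑_{α ∉ Good, β} μ(α,β) ). -/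
/-- Soundness-case chain of inequalities of Claim 3.2: if on a good set of first messages
`α` the joint mass `μ(α,β)` of the simulated transcript is at most `(K/M)·μ₁(α)` for every
second message `β`, then for every `[0,1]`-valued acceptance function `g`, the acceptance
probability under the honest-interaction distribution `ν(α,β) = μ₁(α)/M` is at least
`(1/K)·(acceptance under μ − mass outside Good)`. -/
theorem soundness_chain {Λ Β : Type*} [Fintype Λ] [DecidableEq Λ] [Fintype Β] [Nonempty Β]
    (M : ℕ) (hM : Fintype.card Β = M)
    (μ : Λ × Β → ℝ) (hμ0 : ∀ x, 0 ≤ μ x) (hμ1 : ∑ x, μ x = 1)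
    (μ₁ : Λ → ℝ) (hμ₁ : ∀ α, μ₁ α = ∑ β, μ (α, β))
    (Good : Finset Λ) (K : ℝ) (hK : 0 < K)
    (hbound : ∀ α ∈ Good, ∀ β : Β, μ (α, β) ≤ (K / M) * μ₁ α)
    (g : Λ × Β → ℝ) (hg0 : ∀ x, 0 ≤ g x) (hg1 : ∀ x, g x ≤ 1) :
    (1 / K) * ((∑ x : Λ × Β, μ x * g x)
        - ∑ x ∈ Finset.univ.filter (fun x : Λ × Β => x.1 ∉ Good), μ x)
      ≤ ∑ x : Λ × Β, (μ₁ x.1 / M) * g x := by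
  classical
  have hM0 : (0:ℝ) < M := by
    have := Fintype.card_pos (α := Β); rw [hM] at this; exact_mod_cast this
  have hμ₁0 : ∀ α, 0 ≤ μ₁ α := fun α => by
    rw [hμ₁]; exact Finset.sum_nonneg fun β _ => hμ0 _
  set G : Finset (Λ × Β) := Finset.univ.filter (fun x : Λ × Β => x.1 ∈ Good) with hG
  set Gc : Finset (Λ × Β) := Finset.univ.filter (fun x : Λ × Β => x.1 ∉ Good) with hGc
  -- step 1: S - T ≤ ∑_{x ∈ G} μ x * g x
  have hsplit : (∑ x : Λ × Β, μ x * g x) =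
      (∑ x ∈ G, μ x * g x) + ∑ x ∈ Gc, μ x * g x := by
    rw [hG, hGc, ← Finset.sum_filter_add_sum_filter_not Finset.univ
      (fun x : Λ × Β => x.1 ∈ Good)]
  have h1 : (∑ x : Λ × Β, μ x * g x) - (∑ x ∈ Gc, μ x) ≤ ∑ x ∈ G, μ x * g x := by
    rw [hsplit]
    have : ∑ x ∈ Gc, μ x * g x ≤ ∑ x ∈ Gc, μ x :=
      Finset.sum_le_sum fun x _ => by
        nlinarith [hμ0 x, hg0 x, hg1 x]
    linarith
  -- step 2: ∑_{x ∈ G} μ x * g x ≤ K * ∑ all ν g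
  have h2 : ∑ x ∈ G, μ x * g x ≤ K * ∑ x : Λ × Β, (μ₁ x.1 / M) * g x := by
    rw [Finset.mul_sum]
    calc ∑ x ∈ G, μ x * g x ≤ ∑ x ∈ G, K * ((μ₁ x.1 / M) * g x) := by
          refine Finset.sum_le_sum fun x hx => ?_
          have hxG : x.1 ∈ Good := (Finset.mem_filter.mp hx).2
          have hb := hbound x.1 hxG x.2
          have : K * ((μ₁ x.1 / M) * g x) = (K / M * μ₁ x.1) * g x := by ring
          rw [this]
          exact mul_le_mul_of_nonneg_right (by simpa using hb) (hg0 x)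
      _ ≤ ∑ x : Λ × Β, K * ((μ₁ x.1 / M) * g x) := by
          refine Finset.sum_le_sum_of_subset_of_nonneg (Finset.filter_subset _ _)
            fun x _ _ => ?_
          have : 0 ≤ (μ₁ x.1 / M) * g x :=
            mul_nonneg (div_nonneg (hμ₁0 _) hM0.le) (hg0 x)
          positivity
  rw [div_mul_eq_mul_div, div_le_iff₀ hK, one_mul]
  calc (∑ x : Λ × Β, μ x * g x) - (∑ x ∈ Gc, μ x)
      ≤ ∑ x ∈ G, μ x * g x := h1
    _ ≤ (∑ x : Λ × Β, (μ₁ x.1 / M) * g x) * K := by rw [mul_comm] at h2; exact h2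
end

section
/- Let Λ be a finite type and Β a finite nonempty type with |Β| = M. Let μ be a probability mass function on Λ × Β with first marginal μ₁. Suppose there is a nonnegative function s : Λ → ℝ and a real K > 0 such that μ(α,β) ≤ s(α)·μ₁(α) for all (α,β), and ∑_α μ₁(α)·s(α) ≤ K/M. Define ν(α,β) := μ₁(α)/M. Then for every g : Λ × Β → ℝ with 0 ≤ g ≤ 1, ∑_{(α,β)} μ(α,β)·g(α,β) ≤ 2·√( K · ∑_{(α,β)} ν(α,β)·g(α,β) ). -/
/-- Quantitative core of Theorem 3.1: if the simulated transcript distribution `μ` satisfies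
`μ(α,β) ≤ s(α)·μ₁(α)` with `E_{μ₁}[s] ≤ K/M`, then for every `[0,1]`-valued acceptance
function `g`, the acceptance probability under `μ` is at most
`2·√(K · acceptance probability under the honest distribution ν(α,β) = μ₁(α)/M)`. -/
theorem simulator_acceptance_bound {Λ Β : Type*} [Fintype Λ] [Fintype Β] [Nonempty Β]
    (M : ℕ) (hM : Fintype.card Β = M)
    (μ : Λ × Β → ℝ) (hμ0 : ∀ x, 0 ≤ μ x) (hμ1 : ∑ x, μ x = 1)
    (μ₁ : Λ → ℝ) (hμ₁ : ∀ α, μ₁ α = ∑ β, μ (α, β))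
    (s : Λ → ℝ) (hs : ∀ α, 0 ≤ s α)
    (K : ℝ) (hK : 0 < K)
    (hbound : ∀ α β, μ (α, β) ≤ s α * μ₁ α)
    (hexp : ∑ α, μ₁ α * s α ≤ K / M)
    (g : Λ × Β → ℝ) (hg0 : ∀ x, 0 ≤ g x) (hg1 : ∀ x, g x ≤ 1) :
    ∑ x : Λ × Β, μ x * g x
      ≤ 2 * Real.sqrt (K * ∑ x : Λ × Β, (μ₁ x.1 / M) * g x) := by
  classical
  have hM0 : 0 < (M : ℝ) := by
    have : 0 < Fintype.card Β := Fintype.card_pos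
    rw [hM] at this
    exact_mod_cast this
  have hμ₁0 : ∀ α, 0 ≤ μ₁ α := fun α => by
    rw [hμ₁]; exact Finset.sum_nonneg fun β _ => hμ0 _
  set V := ∑ x : Λ × Β, (μ₁ x.1 / (M : ℝ)) * g x with hV
  have hVterm : ∀ x : Λ × Β, 0 ≤ (μ₁ x.1 / (M : ℝ)) * g x := fun x =>
    mul_nonneg (div_nonneg (hμ₁0 _) hM0.le) (hg0 _)
  have hV0 : 0 ≤ V := Finset.sum_nonneg fun x _ => hVterm x
  rcases eq_or_lt_of_le hV0 with hVeq | hVpos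
  · -- V = 0 : every term μ₁ x.1 * g x is 0, hence LHS ≤ 0 ≤ RHS
    have hzero : ∀ x : Λ × Β, μ₁ x.1 * g x = 0 := by
      intro x
      have h := (Finset.sum_eq_zero_iff_of_nonneg (fun x _ => hVterm x)).mp
        hVeq.symm x (Finset.mem_univ x)
      have : μ₁ x.1 * g x = ((μ₁ x.1 / (M : ℝ)) * g x) * M := by
        field_simp
      rw [this, h, zero_mul]
    have hLHS : ∑ x : Λ × Β, μ x * g x ≤ 0 := by
      have : ∀ x : Λ × Β, μ x * g x ≤ 0 := by
        intro x
        calc μ x * g x ≤ (s x.1 * μ₁ x.1) * g x :=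
              mul_le_mul_of_nonneg_right (hbound x.1 x.2) (hg0 x)
          _ = s x.1 * (μ₁ x.1 * g x) := by ring
          _ = 0 := by rw [hzero, mul_zero]
      calc ∑ x : Λ × Β, μ x * g x ≤ ∑ _x : Λ × Β, (0 : ℝ) :=
            Finset.sum_le_sum fun x _ => this x
        _ = 0 := by simp
    exact hLHS.trans (by positivity)
  · -- V > 0
    set u := Real.sqrt (K / V) with hu
    have hu0 : 0 < u := Real.sqrt_pos.mpr (div_pos hK hVpos)
    have hsplit := Finset.sum_filter_add_sum_filter_not Finset.univ
      (fun x : Λ × Β => s x.1 * M ≤ u) (fun x => μ x * g x)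
    -- bound on the small-s part
    have hA : ∑ x ∈ Finset.univ.filter (fun x : Λ × Β => s x.1 * M ≤ u), μ x * g x
        ≤ u * V := by
      calc ∑ x ∈ Finset.univ.filter (fun x : Λ × Β => s x.1 * M ≤ u), μ x * g x
          ≤ ∑ x ∈ Finset.univ.filter (fun x : Λ × Β => s x.1 * M ≤ u),
              u * ((μ₁ x.1 / (M : ℝ)) * g x) := by
            apply Finset.sum_le_sum
            intro x hx
            have hxP : s x.1 * M ≤ u := (Finset.mem_filter.mp hx).2
            have h1 : μ x ≤ u * (μ₁ x.1 / (M : ℝ)) := by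
              have h2 : μ x ≤ s x.1 * μ₁ x.1 := by
                have := hbound x.1 x.2; simpa using this
              have h3 : s x.1 * μ₁ x.1 ≤ (u / M) * μ₁ x.1 := by
                apply mul_le_mul_of_nonneg_right _ (hμ₁0 _)
                rw [le_div_iff₀ hM0]
                exact hxP
              calc μ x ≤ (u / M) * μ₁ x.1 := h2.trans h3
                _ = u * (μ₁ x.1 / (M : ℝ)) := by ring
            calc μ x * g x ≤ (u * (μ₁ x.1 / (M : ℝ))) * g x :=
                  mul_le_mul_of_nonneg_right h1 (hg0 x)
              _ = u * ((μ₁ x.1 / (M : ℝ)) * g x) := by ring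
        _ ≤ ∑ x : Λ × Β, u * ((μ₁ x.1 / (M : ℝ)) * g x) :=
            Finset.sum_le_sum_of_subset_of_nonneg (Finset.filter_subset _ _)
              (fun x _ _ => mul_nonneg hu0.le (hVterm x))
        _ = u * V := by rw [hV, Finset.mul_sum]
    -- bound on the large-s part
    have hB : ∑ x ∈ Finset.univ.filter (fun x : Λ × Β => ¬ (s x.1 * M ≤ u)), μ x * g x
        ≤ K / u := by
      have hsum : ∑ x : Λ × Β, s x.1 * μ x ≤ K / M := by
        have : ∑ x : Λ × Β, s x.1 * μ x = ∑ α, μ₁ α * s α := by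
          rw [Fintype.sum_prod_type]
          refine Finset.sum_congr rfl fun α _ => ?_
          rw [hμ₁ α, Finset.sum_mul]
          exact Finset.sum_congr rfl fun β _ => mul_comm _ _
        rw [this]; exact hexp
      calc ∑ x ∈ Finset.univ.filter (fun x : Λ × Β => ¬ (s x.1 * M ≤ u)), μ x * g x
          ≤ ∑ x ∈ Finset.univ.filter (fun x : Λ × Β => ¬ (s x.1 * M ≤ u)),
              ((M : ℝ) / u) * (s x.1 * μ x) := by
            apply Finset.sum_le_sum
            intro x hx
            have hxP : u < s x.1 * M := by
              have := (Finset.mem_filter.mp hx).2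
              exact lt_of_not_ge this
            have h1 : μ x * g x ≤ μ x := by
              calc μ x * g x ≤ μ x * 1 :=
                    mul_le_mul_of_nonneg_left (hg1 x) (hμ0 x)
                _ = μ x := mul_one _
            have h2 : μ x ≤ ((M : ℝ) / u) * (s x.1 * μ x) := by
              have : (1 : ℝ) ≤ s x.1 * M / u := by
                rw [le_div_iff₀ hu0, one_mul]
                exact hxP.le
              calc μ x = 1 * μ x := (one_mul _).symm
                _ ≤ (s x.1 * M / u) * μ x :=
                    mul_le_mul_of_nonneg_right this (hμ0 x)
                _ = ((M : ℝ) / u) * (s x.1 * μ x) := by ring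
            exact h1.trans h2
        _ ≤ ∑ x : Λ × Β, ((M : ℝ) / u) * (s x.1 * μ x) :=
            Finset.sum_le_sum_of_subset_of_nonneg (Finset.filter_subset _ _)
              (fun x _ _ => mul_nonneg (div_nonneg hM0.le hu0.le)
                (mul_nonneg (hs _) (hμ0 x)))
        _ = ((M : ℝ) / u) * ∑ x : Λ × Β, s x.1 * μ x := (Finset.mul_sum _ _ _).symm
        _ ≤ ((M : ℝ) / u) * (K / M) :=
            mul_le_mul_of_nonneg_left hsum (div_nonneg hM0.le hu0.le)
        _ = K / u := by field_simp
    -- algebra with square roots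
    have hsqrtV : (0 : ℝ) < Real.sqrt V := Real.sqrt_pos.mpr hVpos
    have h1 : u * V = Real.sqrt K * Real.sqrt V := by
      rw [hu, Real.sqrt_div hK.le, div_mul_eq_mul_div, mul_div_assoc, Real.div_sqrt]
    have h2 : K / u = Real.sqrt K * Real.sqrt V := by
      rw [hu, Real.sqrt_div hK.le, div_div_eq_mul_div, mul_div_right_comm,
        Real.div_sqrt]
    have hKV : Real.sqrt (K * V) = Real.sqrt K * Real.sqrt V := Real.sqrt_mul hK.le V
    calc ∑ x : Λ × Β, μ x * g x
        = (∑ x ∈ Finset.univ.filter (fun x : Λ × Β => s x.1 * M ≤ u), μ x * g x)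
          + ∑ x ∈ Finset.univ.filter (fun x : Λ × Β => ¬ (s x.1 * M ≤ u)), μ x * g x :=
          hsplit.symm
      _ ≤ u * V + K / u := add_le_add hA hB
      _ = 2 * Real.sqrt (K * V) := by rw [h1, h2, hKV]; ring
end

section
/- Let Λ be a finite type and Β a finite type with |Β| = M ≥ 2, and fix β : Λ → Β. Consider the product probability space with mutually independent coordinates: X uniform on Β; G : Λ → Β with all coordinates G(α) independent and uniform on Β; and Z with coordinates Z(α) independent and uniform on the set Β ∖ {β(α)}. Define the random function F : Λ → Β by F(α) := β(α) if G(α) = X, and F(α) := Z(α) otherwise. Then: (i) F is uniformly distributed over all functions Λ → Β, i.e., for every f : Λ → Β, Pr[F = f] = M^{−|Λ|}; and (ii) for every outcome and every α ∈ Λ, F(α) = β(α) if and only if G(α) = X. -/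
/-- Key distributional claim in the proof of Lemma 4.2: on the product probability space with
`X` uniform on `Β`, `G` a uniformly random function `Λ → Β`, and each `Z(α)` uniform on
`Β ∖ {β(α)}` (all mutually independent), the function `F(α) := if G(α) = X then β(α) else
Z(α)` is a uniformly random function `Λ → Β`, and `F(α) = β(α)` exactly when `G(α) = X`. -/
theorem planted_search_reduction {Λ Β : Type*} [Fintype Λ] [DecidableEq Λ]
    [Fintype Β] [DecidableEq Β]
    (M : ℕ) (hM : Fintype.card Β = M) (hM2 : 2 ≤ M)
    (β : Λ → Β)
    (μ : Β × (Λ → Β) × (∀ α : Λ, {b : Β // b ≠ β α}) → ℝ)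
    (hμ : ∀ ω, μ ω = (1 / (M : ℝ)) * (1 / (M : ℝ) ^ Fintype.card Λ)
        * (1 / ((M : ℝ) - 1) ^ Fintype.card Λ))
    (F : Β × (Λ → Β) × (∀ α : Λ, {b : Β // b ≠ β α}) → Λ → Β)
    (hF : ∀ ω α, F ω α = if ω.2.1 α = ω.1 then β α else (ω.2.2 α : Β)) :
    (∀ f : Λ → Β,
      ∑ ω ∈ Finset.univ.filter (fun ω => F ω = f), μ ω = 1 / (M : ℝ) ^ Fintype.card Λ) ∧
    (∀ ω (α : Λ), F ω α = β α ↔ ω.2.1 α = ω.1) := by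
  have key : ∀ ω (α : Λ), F ω α = β α ↔ ω.2.1 α = ω.1 := by
    intro ω α
    rw [hF]
    constructor
    · intro h
      by_contra hne
      rw [if_neg hne] at h
      exact (ω.2.2 α).2 h
    · intro h; rw [if_pos h]
  refine ⟨?_, key⟩
  intro f
  have hcard : (Finset.univ.filter (fun ω => F ω = f)).card
      = M * (M - 1) ^ Fintype.card Λ := by
    have e : {ω : Β × (Λ → Β) × (∀ α : Λ, {b : Β // b ≠ β α}) // F ω = f}
        ≃ Β × (∀ α : Λ, {b : Β // b ≠ β α}) :=
      { toFun := fun ω => ⟨ω.1.1, fun α =>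
          if hα : f α = β α then ω.1.2.2 α
          else ⟨Equiv.swap ω.1.1 (β α) (ω.1.2.1 α), by
            intro hc
            have hgx : ω.1.2.1 α = ω.1.1 := by
              apply (Equiv.swap ω.1.1 (β α)).injective
              rw [hc, Equiv.swap_apply_left]
            exact hα (by rw [← ω.2]; exact (key ω.1 α).2 hgx)⟩⟩
        invFun := fun p => ⟨⟨p.1, fun α => if f α = β α then p.1 else Equiv.swap p.1 (β α) (p.2 α),
            fun α => if hα : f α = β α then p.2 α else ⟨f α, hα⟩⟩, by
          funext α
          rw [hF]
          by_cases hα : f α = β α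
          · simp [hα]
          · have hne : Equiv.swap p.1 (β α) ((p.2 α : Β)) ≠ p.1 := by
              intro hc
              apply (p.2 α).2
              apply (Equiv.swap p.1 (β α)).injective
              rw [hc, Equiv.swap_apply_right]
            simp [hα, hne]⟩
        left_inv := by
          rintro ⟨⟨x, g, z⟩, h⟩
          apply Subtype.ext
          dsimp only
          refine Prod.ext rfl (Prod.ext ?_ ?_)
          · funext α
            by_cases hα : f α = β α
            · have hgx : g α = x := (key (x, g, z) α).1 (by rw [h]; exact hα)
              simp [hα, hgx]
            · simp only [hα, if_false, dif_neg hα]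
              exact Equiv.swap_apply_self _ _ _
          · funext α
            dsimp only
            by_cases hα : f α = β α
            · simp [hα]
            · have hgx : g α ≠ x := fun hc => hα (by rw [← h]; exact (key (x, g, z) α).2 hc)
              have : (z α : Β) = f α := by
                rw [← h, hF]; simp [hgx]
              simp only [dif_neg hα]
              exact Subtype.ext this.symm
        right_inv := by
          rintro ⟨x, w⟩
          refine Prod.ext rfl ?_
          funext α
          dsimp only
          by_cases hα : f α = β α
          · simp [hα]
          · simp only [dif_neg hα]
            apply Subtype.ext
            simp only [hα, if_false]
            exact Equiv.swap_apply_self _ _ _ }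
    calc (Finset.univ.filter (fun ω => F ω = f)).card
        = Fintype.card {ω : Β × (Λ → Β) × (∀ α : Λ, {b : Β // b ≠ β α}) // F ω = f} :=
          (Fintype.card_subtype _).symm
      _ = Fintype.card (Β × (∀ α : Λ, {b : Β // b ≠ β α})) := Fintype.card_congr e
      _ = M * (M - 1) ^ Fintype.card Λ := by
          rw [Fintype.card_prod, Fintype.card_pi, hM]
          congr 1
          rw [Finset.prod_congr rfl (fun α _ => ?_), Finset.prod_const, Finset.card_univ]
          rw [Fintype.card_subtype_compl, hM, Fintype.card_subtype_eq]
  have hM1 : (1:ℕ) ≤ M := by omega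
  have hMne : (M:ℝ) ≠ 0 := by
    have : 0 < M := by omega
    exact_mod_cast this.ne'
  have hM1ne : (M:ℝ) - 1 ≠ 0 := by
    have : (2:ℝ) ≤ M := by exact_mod_cast hM2
    linarith
  rw [Finset.sum_congr rfl (fun ω _ => hμ ω), Finset.sum_const, hcard, nsmul_eq_mul]
  push_cast [Nat.cast_sub hM1]
  field_simp
end

section
/- Let k ≥ 1 and let Λ₁, …, Λ_{2k+1} be finite nonempty types with M_i := |Λ_{2i}| for i = 1, …, k. Let μ be a PMF on T := Λ₁ × ⋯ × Λ_{2k+1}, and for 1 ≤ j ≤ 2k+1 let μ_{≤j} denote the marginal of μ on the first j coordinates. Fix default elements d_{2i+1} ∈ Λ_{2i+1}, and define c_i(a) := μ_{≤2i+1}(a₁,…,a_{2i+1}) / μ_{≤2i}(a₁,…,a_{2i}) when μ_{≤2i}(a₁,…,a_{2i}) > 0, and c_i(a) := [a_{2i+1} = d_{2i+1}] otherwise. Define ν : T → ℝ by ν(a) := μ_{≤1}(a₁) · ∏_{i=1}^k (1/M_i) · c_i(a). Let K > 0 and Good ⊆ T satisfy: for every a ∈ Good and every i ∈ {1,…,k},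 μ_{≤2i}(a₁,…,a_{2i}) ≤ (K/M_i) · μ_{≤2i−1}(a₁,…,a_{2i−1}). Then for every g : T → ℝ with 0 ≤ g ≤ 1, ∑_{a ∈ T} ν(a)·g(a) ≥ K^{−k} · ( ∑_{a ∈ T} μ(a)·g(a) − μ(T ∖ Good) ). -/
/-- Soundness-case chain of inequalities of Claim 6.2, for a `(2k+1)`-round protocol.
Coordinates are indexed by `Fin (2k+1)` (index `j` is the paper's message `j+1`).
`pre j a` is the marginal probability `μ_{≤j}` of the length-`j` prefix of `a`;
`c i a` is the conditional probability of the `(2i+3)`-rd message given the preceding ones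
(the paper's `c_{i+1}`, defaulting to the indicator of the default message `d` on zero-mass
prefixes); `ν` is the real-interaction transcript distribution against the cheating Merlin,
with Arthur's (even) messages uniform.  If on a `Good` set every even-prefix mass is at most
`(K/M_i)` times the preceding odd-prefix mass, then for every `[0,1]`-valued acceptance
function `g` the real acceptance probability is at least
`K^{-k}·(simulated acceptance probability − μ(Goodᶜ))`. -/
theorem constant_round_soundness_chain (k : ℕ) (hk : 1 ≤ k)
    (Λ : Fin (2 * k + 1) → Type) [∀ i, Fintype (Λ i)] [∀ i, Nonempty (Λ i)]
    [∀ i, DecidableEq (Λ i)]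
    (μ : (∀ i, Λ i) → ℝ) (hμ0 : ∀ a, 0 ≤ μ a) (hμ1 : ∑ a, μ a = 1)
    (pre : ℕ → (∀ i, Λ i) → ℝ)
    (hpre : ∀ (j : ℕ) (a : ∀ i, Λ i),
      pre j a = ∑ b ∈ Finset.univ.filter
        (fun b : ∀ i, Λ i => ∀ i : Fin (2 * k + 1), (i : ℕ) < j → b i = a i), μ b)
    (d : ∀ i, Λ i)
    (c : Fin k → (∀ i, Λ i) → ℝ)
    (hc : ∀ (i : Fin k) (a : ∀ i, Λ i),
      c i a = if 0 < pre (2 * (i : ℕ) + 2) a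
        then pre (2 * (i : ℕ) + 3) a / pre (2 * (i : ℕ) + 2) a
        else (if a ⟨2 * (i : ℕ) + 2, by have := i.isLt; omega⟩
                = d ⟨2 * (i : ℕ) + 2, by have := i.isLt; omega⟩ then 1 else 0))
    (ν : (∀ i, Λ i) → ℝ)
    (hν : ∀ a, ν a = pre 1 a *
      ∏ i : Fin k,
        (1 / (Fintype.card (Λ ⟨2 * (i : ℕ) + 1, by have := i.isLt; omega⟩) : ℝ)) * c i a)
    (K : ℝ) (hK : 0 < K)
    (Good : Finset (∀ i, Λ i))
    (hGood : ∀ a ∈ Good, ∀ i : Fin k,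
      pre (2 * (i : ℕ) + 2) a
        ≤ (K / (Fintype.card (Λ ⟨2 * (i : ℕ) + 1, by have := i.isLt; omega⟩) : ℝ))
            * pre (2 * (i : ℕ) + 1) a)
    (g : (∀ i, Λ i) → ℝ) (hg0 : ∀ a, 0 ≤ g a) (hg1 : ∀ a, g a ≤ 1) :
    K ^ (-(k : ℤ)) * ((∑ a, μ a * g a) - ∑ a ∈ Goodᶜ, μ a) ≤ ∑ a, ν a * g a := by
  classical
  have hpre0 : ∀ j a, 0 ≤ pre j a := by
    intro j a; rw [hpre]; exact Finset.sum_nonneg fun b _ => hμ0 b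
  have hmono : ∀ (j j' : ℕ) a, j ≤ j' → pre j' a ≤ pre j a := by
    intro j j' a hjj
    rw [hpre, hpre]
    apply Finset.sum_le_sum_of_subset_of_nonneg
    · intro b hb
      simp only [Finset.mem_filter, Finset.mem_univ, true_and] at hb ⊢
      intro i hi; exact hb i (lt_of_lt_of_le hi hjj)
    · intro b _ _; exact hμ0 b
  have hμle : ∀ j a, μ a ≤ pre j a := by
    intro j a; rw [hpre]
    refine Finset.single_le_sum (f := μ) (fun b _ => hμ0 b) ?_
    simp
  have hpretop : ∀ a, pre (2 * k + 1) a = μ a := by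
    intro a; rw [hpre]
    have hfe : Finset.univ.filter
        (fun b : ∀ i, Λ i => ∀ i : Fin (2 * k + 1), (i : ℕ) < 2 * k + 1 → b i = a i)
        = {a} := by
      ext b
      simp only [Finset.mem_filter, Finset.mem_univ, true_and, Finset.mem_singleton]
      constructor
      · intro h; funext i; exact h i i.isLt
      · intro h i _; rw [h]
    rw [hfe, Finset.sum_singleton]
  have hc0 : ∀ i a, 0 ≤ c i a := by
    intro i a; rw [hc]
    split
    · exact div_nonneg (hpre0 _ _) (hpre0 _ _)
    · split <;> norm_num
  have hM : ∀ i : Fin k,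
      (0 : ℝ) < (Fintype.card (Λ ⟨2 * (i : ℕ) + 1, by have := i.isLt; omega⟩) : ℝ) := by
    intro i
    exact_mod_cast Fintype.card_pos
  have hν0 : ∀ a, 0 ≤ ν a := by
    intro a; rw [hν]
    refine mul_nonneg (hpre0 _ _) (Finset.prod_nonneg fun i _ => mul_nonneg ?_ (hc0 i a))
    positivity
  have hKk : (0 : ℝ) < K ^ k := pow_pos hK k
  -- pointwise key inequality on Good
  have key : ∀ a ∈ Good, μ a ≤ K ^ k * ν a := by
    intro a ha
    by_cases hz : ∀ i : Fin k, 0 < pre (2 * (i : ℕ) + 2) a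
    · have hodd : ∀ i : Fin k, 0 < pre (2 * (i : ℕ) + 1) a := fun i =>
        lt_of_lt_of_le (hz i) (hmono _ _ a (by omega))
    -- telescoping
      have tel : ∀ n, n ≤ k →
          pre 1 a * ∏ i ∈ Finset.range n, pre (2 * i + 3) a / pre (2 * i + 1) a
            = pre (2 * n + 1) a := by
        intro n
        induction n with
        | zero => simp
        | succ m ih =>
          intro hm
          have hmk : m < k := hm
          have hposm : 0 < pre (2 * m + 1) a := hodd ⟨m, hmk⟩
          rw [Finset.prod_range_succ, ← mul_assoc, ih (le_of_lt hmk),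
            mul_comm (pre (2 * m + 1) a), div_mul_cancel₀ _ (ne_of_gt hposm)]
          ring_nf
      have hμeq : μ a = pre 1 a *
          ∏ i : Fin k, pre (2 * (i : ℕ) + 3) a / pre (2 * (i : ℕ) + 1) a := by
        rw [Fin.prod_univ_eq_prod_range
          (fun i => pre (2 * i + 3) a / pre (2 * i + 1) a) k, tel k le_rfl, hpretop]
      have hfac : ∀ i : Fin k,
          pre (2 * (i : ℕ) + 3) a / pre (2 * (i : ℕ) + 1) a
            ≤ K * ((1 / (Fintype.card (Λ ⟨2 * (i : ℕ) + 1, by have := i.isLt; omega⟩) : ℝ))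
                * c i a) := by
        intro i
        have hci : c i a = pre (2 * (i : ℕ) + 3) a / pre (2 * (i : ℕ) + 2) a := by
          rw [hc]; rw [if_pos (hz i)]
        have hratio : pre (2 * (i : ℕ) + 2) a / pre (2 * (i : ℕ) + 1) a
            ≤ K / (Fintype.card (Λ ⟨2 * (i : ℕ) + 1, by have := i.isLt; omega⟩) : ℝ) := by
          rw [div_le_iff₀ (hodd i)]
          exact hGood a ha i
        have heq : pre (2 * (i : ℕ) + 2) a / pre (2 * (i : ℕ) + 1) a * c i a
            = pre (2 * (i : ℕ) + 3) a / pre (2 * (i : ℕ) + 1) a := by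
          rw [hci, div_mul_div_comm,
            mul_comm (pre (2 * (i : ℕ) + 1) a) (pre (2 * (i : ℕ) + 2) a),
            mul_div_mul_left _ _ (ne_of_gt (hz i))]
        calc pre (2 * (i : ℕ) + 3) a / pre (2 * (i : ℕ) + 1) a
            = pre (2 * (i : ℕ) + 2) a / pre (2 * (i : ℕ) + 1) a * c i a := heq.symm
          _ ≤ (K / (Fintype.card (Λ ⟨2 * (i : ℕ) + 1, by have := i.isLt; omega⟩) : ℝ))
                * c i a := mul_le_mul_of_nonneg_right hratio (hc0 i a)
          _ = K * ((1 / (Fintype.card (Λ ⟨2 * (i : ℕ) + 1, by have := i.isLt; omega⟩) : ℝ))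
                * c i a) := by ring
      have hprodle :
          (∏ i : Fin k, pre (2 * (i : ℕ) + 3) a / pre (2 * (i : ℕ) + 1) a)
            ≤ ∏ i : Fin k,
              K * ((1 / (Fintype.card (Λ ⟨2 * (i : ℕ) + 1, by have := i.isLt; omega⟩) : ℝ))
                * c i a) := by
        refine Finset.prod_le_prod (fun i _ => ?_) (fun i _ => hfac i)
        exact div_nonneg (hpre0 _ _) (hpre0 _ _)
      have hprodeq : ∏ i : Fin k,
          K * ((1 / (Fintype.card (Λ ⟨2 * (i : ℕ) + 1, by have := i.isLt; omega⟩) : ℝ))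
            * c i a)
          = K ^ k * ∏ i : Fin k,
              (1 / (Fintype.card (Λ ⟨2 * (i : ℕ) + 1, by have := i.isLt; omega⟩) : ℝ))
                * c i a := by
        rw [Finset.prod_mul_distrib, Finset.prod_const, Finset.card_univ, Fintype.card_fin]
      calc μ a = pre 1 a *
            ∏ i : Fin k, pre (2 * (i : ℕ) + 3) a / pre (2 * (i : ℕ) + 1) a := hμeq
        _ ≤ pre 1 a * ∏ i : Fin k,
              K * ((1 / (Fintype.card (Λ ⟨2 * (i : ℕ) + 1, by have := i.isLt; omega⟩) : ℝ))
                * c i a) := mul_le_mul_of_nonneg_left hprodle (hpre0 1 a)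
        _ = K ^ k * ν a := by rw [hprodeq, hν a]; ring
    · push_neg at hz
      obtain ⟨i, hi⟩ := hz
      have h0 : pre (2 * (i : ℕ) + 2) a = 0 :=
        le_antisymm hi (hpre0 _ _)
      have : μ a ≤ 0 := h0 ▸ hμle (2 * (i : ℕ) + 2) a
      exact le_trans this (mul_nonneg (le_of_lt hKk) (hν0 a))
  -- assemble
  have h2 : (∑ a, μ a * g a) - (∑ a ∈ Goodᶜ, μ a) ≤ K ^ k * ∑ a, ν a * g a := by
    have hsplit : (∑ a, μ a * g a)
        = (∑ a ∈ Good, μ a * g a) + ∑ a ∈ Goodᶜ, μ a * g a :=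
      (Finset.sum_add_sum_compl Good (fun a => μ a * g a)).symm
    have hcomp : ∑ a ∈ Goodᶜ, μ a * g a ≤ ∑ a ∈ Goodᶜ, μ a :=
      Finset.sum_le_sum fun a _ => by
        calc μ a * g a ≤ μ a * 1 := mul_le_mul_of_nonneg_left (hg1 a) (hμ0 a)
          _ = μ a := mul_one _
    have hmain : (∑ a ∈ Good, μ a * g a) ≤ K ^ k * ∑ a, ν a * g a := by
      calc (∑ a ∈ Good, μ a * g a)
          ≤ ∑ a ∈ Good, K ^ k * (ν a * g a) := by
            refine Finset.sum_le_sum fun a ha => ?_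
            rw [← mul_assoc]
            exact mul_le_mul_of_nonneg_right (key a ha) (hg0 a)
        _ ≤ ∑ a, K ^ k * (ν a * g a) := by
            refine Finset.sum_le_sum_of_subset_of_nonneg (Finset.subset_univ _)
              fun a _ _ => ?_
            exact mul_nonneg (le_of_lt hKk) (mul_nonneg (hν0 a) (hg0 a))
        _ = K ^ k * ∑ a, ν a * g a := by rw [Finset.mul_sum]
    linarith
  have hinv : K ^ (-(k : ℤ)) = (K ^ k)⁻¹ := by
    rw [zpow_neg, zpow_natCast]
  rw [hinv]
  calc (K ^ k)⁻¹ * ((∑ a, μ a * g a) - ∑ a ∈ Goodᶜ, μ a)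
      ≤ (K ^ k)⁻¹ * (K ^ k * ∑ a, ν a * g a) :=
        mul_le_mul_of_nonneg_left h2 (by positivity)
    _ = ∑ a, ν a * g a := by field_simp
end
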